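/- Assume p₁ < p and N ≤ α. Then for any a ≠ 0, the global solution w(·,a) has at least one isolated zero in (0,∞), i.e. there exists r₁ > 0 with w(r₁,a) = 0 which is an isolated point of the zero set of w(·,a). -/

import Mathlib

open Set Filter Topology Asymptotics

/-- The p-Laplacian nonlinearity φ_p(x) = |x|^{p-2} x. -/
noncomputable def phiP (p x : ℝ) : ℝ := |x| ^ (p - 2) * x

/-- `w` is a solution of equation (E) on the interval `I ⊆ (0,∞)`:
`w` is C¹ on `I`, `|w'|^{p-2} w'` is C¹ on `I`, and the equation
`(|w'|^{p-2}w')' + ((N-1)/r)|w'|^{p-2}w' + r w' + α w + |w|^{q-1} w = 0`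
holds on `I` (derivatives taken within `I`). -/
def IsSolutionOn (N : ℕ) (p q α : ℝ) (w : ℝ → ℝ) (I : Set ℝ) : Prop :=
  ContDiffOn ℝ 1 w I ∧
  ContDiffOn ℝ 1 (fun r => phiP p (derivWithin w I r)) I ∧
  ∀ r ∈ I,
    derivWithin (fun s => phiP p (derivWithin w I s)) I r
      + ((N : ℝ) - 1) / r * phiP p (derivWithin w I r)
      + r * derivWithin w I r + α * w r + |w r| ^ (q - 1) * w r = 0

/-- `w` is the global solution of (E) on `[0,∞)` with `w(0) = a`, `w'(0) = 0`:
`w ∈ C¹([0,∞))`, `|w'|^{p-2}w' ∈ C¹([0,∞))`, and (E) holds on `(0,∞)`. -/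
def IsGlobalSolution (N : ℕ) (p q α a : ℝ) (w : ℝ → ℝ) : Prop :=
  ContDiffOn ℝ 1 w (Ici 0) ∧
  ContDiffOn ℝ 1 (fun r => phiP p (derivWithin w (Ici 0) r)) (Ici 0) ∧
  (∀ r ∈ Ioi (0 : ℝ),
    derivWithin (fun s => phiP p (derivWithin w (Ici 0) s)) (Ici 0) r
      + ((N : ℝ) - 1) / r * phiP p (derivWithin w (Ici 0) r)
      + r * derivWithin w (Ici 0) r + α * w r + |w r| ^ (q - 1) * w r = 0) ∧
  w 0 = a ∧ derivWithin w (Ici 0) 0 = 0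

/-- `r` is an isolated zero of `w` relative to the set `I`. -/
def IsIsolatedZeroOn (w : ℝ → ℝ) (I : Set ℝ) (r : ℝ) : Prop :=
  r ∈ I ∧ w r = 0 ∧ ∀ᶠ s in 𝓝[I \ {r}] r, w s ≠ 0

/-- `w` has at least `n` isolated zeros in `(0,∞)`. -/
def HasAtLeastIsolatedZeros (w : ℝ → ℝ) (n : ℕ) : Prop :=
  ∃ z : Fin n → ℝ, StrictMono z ∧ ∀ i, 0 < z i ∧ IsIsolatedZeroOn w (Ici 0) (z i)

/-!
Write `N = n + 1`. For a solution of (E) the flux `F(r) = r^{N-1} (φ_p(w') + r w)` satisfies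
`F' = r^{N-1} ((N - α) w - |w|^{q-1} w)`, so as long as `w > 0` it decreases strictly from
`F(0) = 0` (here `N ≤ α` is used). Replacing `w` by `-w` we may take `a > 0`; at the first zero
`r₁` of `w` we then get `φ_p(w'(r₁)) < 0`, so `w'(r₁) ≠ 0` and `r₁` is an isolated zero.

A first zero exists: if `w > 0` on `(0, ∞)`, then `F ≤ F(1) < 0` on `[1, ∞)` yields
`φ_p(w') ≤ -c r^{-(N-1)}` and `φ_p(w') ≤ -r w`. Hence `w ↓ 0`, and a bound `w' ≤ -K r^{-m}` with
`m > 1` integrates to `w ≥ K' r^{1-m}`, which fed back into `φ_p(w') ≤ -r w` improves `m` to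
`(m - 2)/(p - 1)`. Starting from `m = (N - 1)/(p - 1)`, the condition `p > 2N/(N + 1)` makes each
step lower `m` by a fixed amount until `m ≤ 1`, and then integrating the bound contradicts `w > 0`.
-/

lemma phiP_nonneg (p : ℝ) {x : ℝ} (hx : 0 ≤ x) : 0 ≤ phiP p x :=
  mul_nonneg (Real.rpow_nonneg (abs_nonneg x) _) hx

lemma phiP_neg (p x : ℝ) : phiP p (-x) = -phiP p x := by
  simp [phiP]

lemma phiP_of_neg (p : ℝ) {x : ℝ} (hx : x < 0) : phiP p x = -|x| ^ (p - 1) := by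
  rw [phiP, show p - 1 = p - 2 + 1 by ring, Real.rpow_add_one (abs_ne_zero.2 hx.ne),
    abs_of_neg hx]
  ring

lemma le_neg_rpow_inv_of_phiP_le_neg {p x A : ℝ} (hp : 1 < p) (hA : 0 < A)
    (h : phiP p x ≤ -A) : x ≤ -A ^ (p - 1)⁻¹ := by
  have hx : x < 0 := by
    by_contra! hx
    linarith [phiP_nonneg p hx]
  rw [phiP_of_neg p hx] at h
  have hle : A ^ (p - 1)⁻¹ ≤ (|x| ^ (p - 1)) ^ (p - 1)⁻¹ :=
    Real.rpow_le_rpow hA.le (by linarith) (inv_nonneg.2 (by linarith))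
  rw [Real.rpow_rpow_inv (abs_nonneg x) (by linarith), abs_of_neg hx] at hle
  linarith

lemma antitoneOn_Ici_of_hasDerivAt_nonpos {f f' : ℝ → ℝ} {R : ℝ}
    (hf : ∀ r ≥ R, HasDerivAt f (f' r) r) (hf' : ∀ r ≥ R, f' r ≤ 0) :
    AntitoneOn f (Ici R) :=
  antitoneOn_of_hasDerivWithinAt_nonpos (convex_Ici R)
    (fun r hr => (hf r hr).continuousAt.continuousWithinAt)
    (fun r hr => (hf r (interior_subset hr)).hasDerivWithinAt)
    (fun r hr => hf' r (interior_subset hr))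

lemma antitoneOn_add_rpow_of_hasDerivAt_le {u u' : ℝ → ℝ} {R K m : ℝ} (hR : 0 < R)
    (hm : m ≠ 1) (hu : ∀ r ≥ R, HasDerivAt u (u' r) r)
    (hu' : ∀ r ≥ R, u' r ≤ -(K * r ^ (-m))) :
    AntitoneOn (fun r => u r + K / (1 - m) * r ^ (1 - m)) (Ici R) := by
  have hm' : 1 - m ≠ 0 := sub_ne_zero.2 hm.symm
  refine antitoneOn_Ici_of_hasDerivAt_nonpos (f' := fun r => u' r + K * r ^ (-m))
    (fun r hr => ?_) (fun r hr => by linarith [hu' r hr])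
  have hpow := (Real.hasDerivAt_rpow_const (p := 1 - m) (Or.inl (hR.trans_le hr).ne')).const_mul
    (K / (1 - m))
  refine ((hu r hr).add hpow).congr_deriv ?_
  rw [sub_sub_cancel_left]
  field_simp

def HasSlopeDecay (u' : ℝ → ℝ) (m : ℝ) : Prop :=
  ∃ K > 0, ∃ R ≥ 1, ∀ r ≥ R, u' r ≤ -(K * r ^ (-m))

namespace HasSlopeDecay

variable {p : ℝ} {u u' : ℝ → ℝ}

lemma mono {m m' : ℝ} (h : HasSlopeDecay u' m) (hm : m ≤ m') : HasSlopeDecay u' m' := by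
  obtain ⟨K, hK, R, hR, hbd⟩ := h
  refine ⟨K, hK, R, hR, fun r hr => (hbd r hr).trans (neg_le_neg ?_)⟩
  exact mul_le_mul_of_nonneg_left
    (Real.rpow_le_rpow_of_exponent_le (hR.trans hr) (neg_le_neg hm)) hK.le

lemma of_phiP_le {K R m : ℝ} (hp : 1 < p) (hK : 0 < K) (hR : 1 ≤ R)
    (h : ∀ r ≥ R, phiP p (u' r) ≤ -(K * r ^ (-m))) : HasSlopeDecay u' (m / (p - 1)) := by
  refine ⟨K ^ (p - 1)⁻¹, Real.rpow_pos_of_pos hK _, R, hR, fun r hr => ?_⟩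
  have hr : 0 < r := zero_lt_one.trans_le (hR.trans hr)
  have hbd := le_neg_rpow_inv_of_phiP_le_neg hp (mul_pos hK (Real.rpow_pos_of_pos hr _)) (h r ‹_›)
  rwa [Real.mul_rpow hK.le (Real.rpow_nonneg hr.le _), ← Real.rpow_mul hr.le, neg_mul,
    ← div_eq_mul_inv] at hbd

lemma one_le {m : ℝ} (hu : ∀ r ≥ 1, HasDerivAt u (u' r) r) (hpos : ∀ r ≥ 1, 0 < u r)
    (h : HasSlopeDecay u' m) : 1 ≤ m := by
  by_contra! hm
  obtain ⟨K, hK, R, hR, hbd⟩ := h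
  have hanti := antitoneOn_add_rpow_of_hasDerivAt_le (by linarith) hm.ne
    (fun r hr => hu r (hR.trans hr)) hbd
  have hgrow : Tendsto (fun r : ℝ => K / (1 - m) * r ^ (1 - m)) atTop atTop :=
    (tendsto_rpow_atTop (by linarith)).const_mul_atTop (div_pos hK (by linarith))
  obtain ⟨r, hr, hbig⟩ := ((eventually_ge_atTop R).and
    (hgrow.eventually_gt_atTop (u R + K / (1 - m) * R ^ (1 - m)))).exists
  have := hanti self_mem_Ici hr hr
  linarith [hpos r (hR.trans hr)]

lemma bootstrap {m : ℝ} (hp : 1 < p) (hu : ∀ r ≥ 1, HasDerivAt u (u' r) r)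
    (hφ : ∀ r ≥ 1, phiP p (u' r) ≤ -(r * u r)) (hlim : Tendsto u atTop (𝓝 0))
    (h : HasSlopeDecay u' m) (hm : 1 < m) : HasSlopeDecay u' ((m - 2) / (p - 1)) := by
  obtain ⟨K, hK, R, hR, hbd⟩ := h
  have hanti := antitoneOn_add_rpow_of_hasDerivAt_le (by linarith) hm.ne'
    (fun r hr => hu r (hR.trans hr)) hbd
  have hlow : ∀ r ≥ R, K / (m - 1) * r ^ (1 - m) ≤ u r := by
    intro r hr
    have hlim' : Tendsto (fun s => u s + K / (1 - m) * s ^ (1 - m)) atTop (𝓝 0) := by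
      have := (tendsto_rpow_neg_atTop (y := m - 1) (by linarith)).const_mul (K / (1 - m))
      simpa [show -(m - 1) = 1 - m by ring] using hlim.add this
    have hnonneg : 0 ≤ u r + K / (1 - m) * r ^ (1 - m) :=
      le_of_tendsto hlim' (by
        filter_upwards [eventually_ge_atTop r] with s hs
        exact hanti (mem_Ici.2 hr) (mem_Ici.2 (hr.trans hs)) hs)
    have hneg : K / (m - 1) * r ^ (1 - m) = -(K / (1 - m) * r ^ (1 - m)) := by
      rw [← neg_mul, ← div_neg, neg_sub]
    linarith
  refine of_phiP_le (K := K / (m - 1)) hp (div_pos hK (by linarith)) hR fun r hr => ?_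
  have hr0 : 0 < r := by linarith [hR.trans hr]
  have hsplit : K / (m - 1) * r ^ (-(m - 2)) = r * (K / (m - 1) * r ^ (1 - m)) := by
    rw [show -(m - 2) = 1 - m + 1 by ring, Real.rpow_add_one hr0.ne']
    ring
  calc phiP p (u' r) ≤ -(r * u r) := hφ r (hR.trans hr)
    _ ≤ -(K / (m - 1) * r ^ (-(m - 2))) := by
      rw [hsplit]
      exact neg_le_neg (mul_le_mul_of_nonneg_left (hlow r hr) hr0.le)

end HasSlopeDecay

lemma tendsto_atTop_zero_of_phiP_le {p : ℝ} {u u' : ℝ → ℝ} (hp : 1 < p)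
    (hu : ∀ r ≥ 1, HasDerivAt u (u' r) r) (hpos : ∀ r ≥ 1, 0 < u r)
    (hφ : ∀ r ≥ 1, phiP p (u' r) ≤ -(r * u r)) : Tendsto u atTop (𝓝 0) := by
  have hanti : AntitoneOn u (Ici 1) := antitoneOn_Ici_of_hasDerivAt_nonpos hu fun r hr => by
    have hru : 0 < r * u r := mul_pos (by linarith) (hpos r hr)
    linarith [le_neg_rpow_inv_of_phiP_le_neg hp hru (hφ r hr), Real.rpow_pos_of_pos hru (p - 1)⁻¹]
  refine tendsto_order.2 ⟨fun a ha => ?_, fun a ha => ?_⟩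
  · filter_upwards [eventually_ge_atTop 1] with r hr using ha.trans (hpos r hr)
  by_contra hev
  have hge : ∀ r ≥ 1, a ≤ u r := by
    intro r hr
    by_contra! hlt
    refine hev ?_
    filter_upwards [eventually_ge_atTop r] with s hs
    exact (hanti (mem_Ici.2 hr) (mem_Ici.2 (hr.trans hs)) hs).trans_lt hlt
  -- a positive limit would force a slope bounded away from zero
  have := (HasSlopeDecay.of_phiP_le (m := 0) hp ha le_rfl fun r hr => ?_).one_le hu hpos
  · norm_num at this
  rw [neg_zero, Real.rpow_zero, mul_one]
  nlinarith [hge r hr, hpos r hr, hφ r hr]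

lemma exists_le_of_descent {P : ℝ → Prop} {a b δ : ℝ} (hδ : 0 < δ) (hb : P b)
    (hstep : ∀ m, a < m → m ≤ b → P m → P (m - δ)) : ∃ m ≤ a, P m := by
  by_contra! hlow
  have key : ∀ k : ℕ, ∀ m ≤ b, m < a + k * δ → ¬P m := by
    intro k
    induction k with
    | zero => exact fun m _ hm => hlow m (by simpa using hm.le)
    | succ k ih =>
      intro m hmb hm hP
      rcases le_or_gt m a with hma | hma
      · exact hlow m hma hP
      · push_cast at hm
        exact ih (m - δ) (by linarith) (by linarith) (hstep m hma hmb hP)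
  obtain ⟨k, hk⟩ := exists_nat_gt ((b - a) / δ)
  rw [div_lt_iff₀ hδ] at hk
  exact key k b le_rfl (by linarith) hb

lemma exists_pos_forall_div_le_sub {p n : ℝ} (hp : 1 < p) (hp1 : 2 * (n + 1) < p * (n + 2)) :
    ∃ δ > 0, ∀ m, 1 ≤ m → m ≤ n / (p - 1) → (m - 2) / (p - 1) ≤ m - δ := by
  have hp0 : 0 < p - 1 := by linarith
  obtain ⟨β, hβ0, hβ⟩ : ∃ β > 0, β = (p - 1)⁻¹ := ⟨_, inv_pos.2 hp0, rfl⟩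
  have hβp : β * (p - 1) = 1 := by rw [hβ, inv_mul_cancel₀ hp0.ne']
  simp only [div_eq_mul_inv, ← hβ]
  -- `m - (m - 2) β` is affine in `m`, so its minimum on the interval is at an endpoint
  refine ⟨min (1 + β) (n * β - (n * β - 2) * β), lt_min (by linarith) ?_, fun m h1 h2 => ?_⟩
  · have hend : (n * β - (n * β - 2) * β) * (p - 1) ^ 2 = p * (n + 2) - 2 * (n + 1) := by
      linear_combination (n * (p - 1) + 2 * (p - 1) - n * (β * (p - 1) + 1)) * hβp
    nlinarith [pow_pos hp0 2]
  · rcases le_or_gt β 1 with hb | hb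
    · nlinarith [min_le_left (1 + β) (n * β - (n * β - 2) * β),
        mul_nonneg (by linarith : (0:ℝ) ≤ m - 1) (by linarith : (0:ℝ) ≤ 1 - β)]
    · nlinarith [min_le_right (1 + β) (n * β - (n * β - 2) * β),
        mul_nonneg (by linarith : (0:ℝ) ≤ n * β - m) (by linarith : (0:ℝ) ≤ β - 1)]

lemma exists_nonpos_of_phiP_le {p n c : ℝ} {u u' : ℝ → ℝ} (hp : 1 < p)
    (hp1 : 2 * (n + 1) < p * (n + 2)) (hc : 0 < c) (hu : ∀ r ≥ 1, HasDerivAt u (u' r) r)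
    (hφ : ∀ r ≥ 1, phiP p (u' r) ≤ -(r * u r))
    (hφc : ∀ r ≥ 1, phiP p (u' r) ≤ -(c * r ^ (-n))) :
    ∃ r ≥ 1, u r ≤ 0 := by
  by_contra! hpos
  have hlim := tendsto_atTop_zero_of_phiP_le hp hu hpos hφ
  have hbootstrap {m : ℝ} (h : HasSlopeDecay u' m) (hm : 1 < m) :=
    h.bootstrap hp hu hφ hlim hm
  obtain ⟨δ, hδ, hδle⟩ := exists_pos_forall_div_le_sub hp hp1
  obtain ⟨m, hm1, hm⟩ := exists_le_of_descent (a := 1) hδ (.of_phiP_le hp hc le_rfl hφc)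
    fun m hm1 hmb h => (hbootstrap h hm1).mono (hδle m hm1.le hmb)
  -- raise the exponent above 1 so that one more bootstrap step brings it below 1
  have hle := (hbootstrap (hm.mono (by linarith : m ≤ 3 / 2)) (by norm_num)).one_le hu hpos
  have hneg : (3 / 2 - 2) / (p - 1) < 0 := div_neg_of_neg_of_pos (by norm_num) (by linarith)
  linarith

lemma IsIsolatedZeroOn.of_hasDerivAt {w : ℝ → ℝ} {I : Set ℝ} {r d : ℝ} (hd : HasDerivAt w d r)
    (hd0 : d ≠ 0) (hr : r ∈ I) (hwr : w r = 0) : IsIsolatedZeroOn w I r := by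
  refine ⟨hr, hwr, ?_⟩
  have hslope := (hasDerivAt_iff_tendsto_slope.1 hd).eventually_ne hd0
  filter_upwards [nhdsWithin_mono r (fun x hx => hx.2) hslope] with s hs hws
  exact hs (by simp [slope_def_field, hws, hwr])

lemma isIsolatedZeroOn_neg_iff {w : ℝ → ℝ} {I : Set ℝ} {r : ℝ} :
    IsIsolatedZeroOn (fun s => -w s) I r ↔ IsIsolatedZeroOn w I r := by
  simp [IsIsolatedZeroOn]

lemma ContinuousOn.exists_first_zero {w : ℝ → ℝ} (hw : ContinuousOn w (Ici 0)) (h0 : 0 < w 0)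
    (hz : ∃ r ≥ 0, w r ≤ 0) : ∃ r₁ > 0, w r₁ = 0 ∧ ∀ s ∈ Ico 0 r₁, 0 < w s := by
  set Z := Ici 0 ∩ w ⁻¹' Iic 0
  have hZ : IsClosed Z := hw.preimage_isClosed_of_isClosed isClosed_Ici isClosed_Iic
  have hbdd : BddBelow Z := ⟨0, fun x hx => hx.1⟩
  obtain ⟨hr₁0, hr₁⟩ : sInf Z ∈ Z := hZ.csInf_mem hz hbdd
  have hbelow : ∀ s ∈ Ico 0 (sInf Z), 0 < w s := fun s hs => by
    by_contra! hws
    exact hs.2.not_ge (csInf_le hbdd ⟨hs.1, hws⟩)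
  have hpos : 0 < sInf Z := lt_of_le_of_ne hr₁0 fun h => by
    rw [← h] at hr₁
    exact hr₁.not_gt h0
  refine ⟨sInf Z, hpos, le_antisymm hr₁ ?_, hbelow⟩
  by_contra! hneg
  obtain ⟨t, ht, hwt⟩ := intermediate_value_Ioo' hpos.le
    (hw.mono Icc_subset_Ici_self) ⟨hneg, h0⟩
  exact (hbelow t ⟨ht.1.le, ht.2⟩).ne' hwt

namespace IsGlobalSolution

variable {n : ℕ} {p q α a : ℝ} {w : ℝ → ℝ}

lemma hasDerivAt {N : ℕ} (hw : IsGlobalSolution N p q α a w) {r : ℝ} (hr : 0 < r) :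
    HasDerivAt w (derivWithin w (Ici 0) r) r := by
  rw [derivWithin_of_mem_nhds (Ici_mem_nhds hr)]
  exact ((hw.1.differentiableOn one_ne_zero r hr.le).differentiableAt
    (Ici_mem_nhds hr)).hasDerivAt

lemma hasDerivAt_phiP {N : ℕ} (hw : IsGlobalSolution N p q α a w) {r : ℝ} (hr : 0 < r) :
    HasDerivAt (fun s => phiP p (derivWithin w (Ici 0) s))
      (derivWithin (fun s => phiP p (derivWithin w (Ici 0) s)) (Ici 0) r) r := by
  rw [derivWithin_of_mem_nhds (Ici_mem_nhds hr)]
  exact ((hw.2.1.differentiableOn one_ne_zero r hr.le).differentiableAt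
    (Ici_mem_nhds hr)).hasDerivAt

lemma neg {N : ℕ} (hw : IsGlobalSolution N p q α a w) :
    IsGlobalSolution N p q α (-a) (fun r => -w r) := by
  obtain ⟨hC1, hφC1, hode, hw0, hw'0⟩ := hw
  have hder : derivWithin (fun r => -w r) (Ici 0) = fun s => -derivWithin w (Ici 0) s :=
    funext fun _ => derivWithin.fun_neg
  have hφ : (fun s => phiP p (derivWithin (fun r => -w r) (Ici 0) s))
      = fun s => -phiP p (derivWithin w (Ici 0) s) := by
    simp only [hder, phiP_neg]
  refine ⟨hC1.neg, by rw [hφ]; exact hφC1.neg, fun r hr => ?_, by simp [hw0], by simp [hder, hw'0]⟩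
  rw [hφ, derivWithin.fun_neg, hder]
  simp only [abs_neg, phiP_neg]
  linear_combination -hode r hr

noncomputable def flux (n : ℕ) (p : ℝ) (w : ℝ → ℝ) (r : ℝ) : ℝ :=
  r ^ n * phiP p (derivWithin w (Ici 0) r) + r ^ (n + 1) * w r

lemma hasDerivAt_flux (hw : IsGlobalSolution (n + 1) p q α a w) {r : ℝ} (hr : 0 < r) :
    HasDerivAt (flux n p w) (r ^ n * (((n : ℝ) + 1 - α) * w r - |w r| ^ (q - 1) * w r)) r := by
  have hode := hw.2.2.1 r hr
  push_cast at hode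
  refine (((hasDerivAt_pow n r).mul (hw.hasDerivAt_phiP hr)).add
    ((hasDerivAt_pow (n + 1) r).mul (hw.hasDerivAt hr))).congr_deriv ?_
  rcases n with _ | k
  · simp only [pow_zero, CharP.cast_eq_zero, zero_mul] at hode ⊢
    linear_combination hode
  · rw [Nat.add_sub_cancel]
    push_cast at hode ⊢
    field_simp at hode
    linear_combination r ^ k * hode

lemma flux_zero (hw : IsGlobalSolution (n + 1) p q α a w) : flux n p w 0 = 0 := by
  simp [flux, hw.2.2.2.2, phiP]

lemma flux_lt_flux (hw : IsGlobalSolution (n + 1) p q α a w) (hNα : (n : ℝ) + 1 ≤ α) {s t : ℝ}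
    (hs : 0 ≤ s) (hst : s < t) (hpos : ∀ x ∈ Ioo 0 t, 0 < w x) :
    flux n p w t < flux n p w s := by
  have hcont : ContinuousOn (flux n p w) (Icc 0 t) :=
    (((continuous_pow n).continuousOn.mul hw.2.1.continuousOn).add
      ((continuous_pow (n + 1)).continuousOn.mul hw.1.continuousOn)).mono Icc_subset_Ici_self
  refine strictAntiOn_of_hasDerivWithinAt_neg (convex_Icc 0 t) hcont
    (fun x hx => (hw.hasDerivAt_flux (by rw [interior_Icc] at hx; exact hx.1)).hasDerivWithinAt) ?_
    ⟨hs, hst.le⟩ (right_mem_Icc.2 (hs.trans hst.le)) hst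
  rw [interior_Icc]
  intro x hx
  have hwx := hpos x hx
  refine mul_neg_of_pos_of_neg (pow_pos hx.1 n) ?_
  nlinarith [Real.rpow_pos_of_pos (abs_pos.2 hwx.ne') (q - 1)]

lemma exists_nonpos (hw : IsGlobalSolution (n + 1) p q α a w) (hp : 1 < p)
    (hp1 : 2 * ((n : ℝ) + 1) < p * ((n : ℝ) + 2)) (hNα : (n : ℝ) + 1 ≤ α) :
    ∃ r > 0, w r ≤ 0 := by
  by_contra! hpos
  have hflux_lt {s t : ℝ} (hs : 0 ≤ s) (hst : s < t) : flux n p w t < flux n p w s :=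
    hw.flux_lt_flux hNα hs hst fun x hx => hpos x hx.1
  have hflux_neg {r : ℝ} (hr : 0 < r) : flux n p w r < 0 := hw.flux_zero ▸ hflux_lt le_rfl hr
  have hφ : ∀ r ≥ 1, phiP p (derivWithin w (Ici 0) r) ≤ -(r * w r) := by
    intro r hr
    have hprod : r ^ n * (phiP p (derivWithin w (Ici 0) r) + r * w r) < 0 := by
      have := hflux_neg (by linarith : (0 : ℝ) < r)
      unfold flux at this
      linear_combination this
    linarith [neg_of_mul_neg_right hprod (by positivity)]
  have hφc : ∀ r ≥ 1, phiP p (derivWithin w (Ici 0) r) ≤ -(-flux n p w 1 * r ^ (-(n : ℝ))) := by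
    intro r hr
    have hr0 : 0 < r := by linarith
    have hle : flux n p w r ≤ flux n p w 1 := by
      rcases hr.eq_or_lt with h | h
      · rw [h]
      · exact (hflux_lt zero_le_one h).le
    have hφ : r ^ n * phiP p (derivWithin w (Ici 0) r) ≤ flux n p w 1 := by
      have := mul_pos (pow_pos hr0 (n + 1)) (hpos r hr0)
      unfold flux at hle ⊢
      linarith
    rw [Real.rpow_neg hr0.le, Real.rpow_natCast, ← div_eq_mul_inv, neg_div, neg_neg,
      le_div_iff₀' (pow_pos hr0 n)]
    exact hφ
  obtain ⟨r, hr, hwr⟩ := exists_nonpos_of_phiP_le hp hp1 (by linarith [hflux_neg one_pos])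
    (fun r hr => hw.hasDerivAt (by linarith)) hφ hφc
  exact hwr.not_gt (hpos r (by linarith))

lemma exists_isIsolatedZeroOn_of_pos (hw : IsGlobalSolution (n + 1) p q α a w) (hp : 1 < p)
    (hp1 : 2 * ((n : ℝ) + 1) < p * ((n : ℝ) + 2)) (hNα : (n : ℝ) + 1 ≤ α) (ha : 0 < a) :
    ∃ r₁ : ℝ, 0 < r₁ ∧ IsIsolatedZeroOn w (Ici 0) r₁ := by
  obtain ⟨r, hr, hwr⟩ := hw.exists_nonpos hp hp1 hNα
  obtain ⟨r₁, hr₁, hwr₁, hbelow⟩ :=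
    hw.1.continuousOn.exists_first_zero (hw.2.2.2.1 ▸ ha) ⟨r, hr.le, hwr⟩
  have hflux : flux n p w r₁ < 0 :=
    hw.flux_zero ▸ hw.flux_lt_flux hNα le_rfl hr₁ fun x hx => hbelow x ⟨hx.1.le, hx.2⟩
  have hd : derivWithin w (Ici 0) r₁ ≠ 0 := fun h => by
    simp [flux, h, hwr₁, phiP] at hflux
  exact ⟨r₁, hr₁, .of_hasDerivAt (hw.hasDerivAt hr₁) hd (mem_Ici.2 hr₁.le) hwr₁⟩

end IsGlobalSolution

theorem stmt3_general (N : ℕ) (hN : 1 ≤ N) (p q α : ℝ) (hp : 1 < p)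
    (hp1 : 2 * (N : ℝ) / (N + 1) < p) (hNα : (N : ℝ) ≤ α)
    (a : ℝ) (ha : a ≠ 0) (w : ℝ → ℝ) (hw : IsGlobalSolution N p q α a w) :
    ∃ r₁ : ℝ, 0 < r₁ ∧ IsIsolatedZeroOn w (Ici 0) r₁ := by
  obtain ⟨n, rfl⟩ : ∃ n, N = n + 1 := ⟨N - 1, by omega⟩
  push_cast at hp1 hNα
  rw [div_lt_iff₀ (by positivity)] at hp1
  replace hp1 : 2 * ((n : ℝ) + 1) < p * ((n : ℝ) + 2) := by linarith
  rcases ha.lt_or_gt with ha | ha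
  · obtain ⟨r₁, hr₁, hz⟩ := hw.neg.exists_isIsolatedZeroOn_of_pos hp hp1 hNα (by linarith)
    exact ⟨r₁, hr₁, isIsolatedZeroOn_neg_iff.1 hz⟩
  · exact hw.exists_isIsolatedZeroOn_of_pos hp hp1 hNα ha

/-- Assume `p₁ = 2N/(N+1) < p` and `N ≤ α`. Then for any `a ≠ 0`, the global
solution `w(·,a)` has at least one isolated zero in `(0,∞)`. -/
theorem stmt3 (N : ℕ) (hN : 1 ≤ N) (p q α : ℝ) (hp : 1 < p) (hq : 1 < q) (hα : 0 < α)
    (hp1 : 2 * (N : ℝ) / (N + 1) < p) (hNα : (N : ℝ) ≤ α)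
    (a : ℝ) (ha : a ≠ 0) (w : ℝ → ℝ) (hw : IsGlobalSolution N p q α a w) :
    ∃ r₁ : ℝ, 0 < r₁ ∧ IsIsolatedZeroOn w (Ici 0) r₁ :=
  stmt3_general N hN p q α hp hp1 hNα a ha w hw
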